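/- Optimal exercise of the American put payoff with positive part: fix k ≥ 0 and define the extended stopping times τ̲ᵏ := min{ t ∈ {0,...,N} : K_t ≤ k } and τ̄ᵏ := min{ t ∈ {0,...,N} : K_t < k } (each equal to ∞ if no such t exists). Let τᵏ be any extended stopping time (τᵏ : Ω → {0,...,N} ∪ {∞} with {τᵏ = t} ∈ F_t for t ≤ N) satisfying τ̲ᵏ ≤ τᵏ ≤ τ̄ᵏ a.s. and, a.s. on {τᵏ ≤ N}, min_{0≤v≤τᵏ} K_v = K_{τᵏ}. Then: (a) a.s. on {τᵏ ≤ N}, K_{τᵏ} ≤ k and hence P_{τᵏ} ≤ k; and (b) the stopping time τᵏ ∧ N ∈ T_{0,N} maximizes the expected payoff of the American put with strike k: for every stopping time τ ∈ T_{0,N}, E_0[(1+r)^{-τ}(k - P_τ)⁺] ≤ E_0[(1+r)^{-(τᵏ∧N)}(k - P_{τᵏ∧N})⁺] a.s. -/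

import Mathlib

/-!
Write `q_t = (1+r)^{-t}` and
`W = Σ_{u<N} (r/(1+r)) q_u (max_{v≤u} (k - K_v))⁺ + q_N (max_{v≤N} (k - K_v))⁺` (`putMajorant`).
The weights `(r/(1+r)) q_u`, `t ≤ u < N`, and `q_N` add up to `q_t`, so the representation of `P`
by `K` gives `E_t[Y_t] = q_t (k - P_t)`, where `Y_t = discRunMax r N (k - K) t` is the same sum
with the running maxima of `k - K` started at `t` and without positive parts. Since `Y_t ≤ W` and `0 ≤ W`, the martingale
`E_t[W]` dominates the discounted payoff `q_t (k - P_t)⁺`. Before `τᵏ` we have `K ≥ k`, and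
`K_{τᵏ} ≤ k`; hence `W = Y_t` on `{τᵏ = t}` and `W = 0` on `{τᵏ > N}`, so the domination is an
equality at `σ = τᵏ ∧ N`. Optional stopping for the nonlinear expectation, `E_0[E_τ[W]] = E_0[W]`,
then gives `E_0[q_τ (k - P_τ)⁺] ≤ E_0[W] = E_0[q_σ (k - P_σ)⁺]`.

For (a), the representation bounds `-q_t P_t` below by `E_t[-q_t K_t] = -q_t K_t`, so `P_t ≤ K_t`;
and `K_{τᵏ} ≤ k` because `τ̲ᵏ ≤ τᵏ` provides some `s ≤ τᵏ` with `K_s ≤ k`, while `K` attains its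
running minimum at `τᵏ`.
-/

open MeasureTheory Filter

/-- Running maximum `max_{t ≤ v ≤ u} L v ω` (intended for `t ≤ u`). -/
noncomputable def runMax {Ω : Type*} (L : ℕ → Ω → ℝ) (t u : ℕ) (ω : Ω) : ℝ :=
  (Finset.Icc t u).fold max (L t ω) fun v => L v ω

/-- Running minimum `min_{t ≤ v ≤ u} K v ω` (intended for `t ≤ u`). -/
noncomputable def runMin {Ω : Type*} (K : ℕ → Ω → ℝ) (t u : ℕ) (ω : Ω) : ℝ :=
  (Finset.Icc t u).fold min (K t ω) fun v => K v ω

/-- A discrete-time nonlinear expectation on the horizon `{0, ..., N}`: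
a family of maps `E t` sending square-integrable `F N`-measurable random
variables to square-integrable `F t`-measurable random variables, satisfying
monotonicity, strict monotonicity, translation invariance, the tower property,
the zero-one law and monotone convergence. -/
structure NLExp {Ω : Type*} {m0 : MeasurableSpace Ω} (μ : Measure Ω)
    (F : Filtration ℕ m0) (N : ℕ) where
  E : ℕ → (Ω → ℝ) → Ω → ℝ
  adapted : ∀ t, t ≤ N → ∀ ξ : Ω → ℝ, StronglyMeasurable[F N] ξ → MemLp ξ 2 μ →
    StronglyMeasurable[F t] (E t ξ)
  sqInt : ∀ t, t ≤ N → ∀ ξ : Ω → ℝ, StronglyMeasurable[F N] ξ → MemLp ξ 2 μ →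
    MemLp (E t ξ) 2 μ
  mono : ∀ t, t ≤ N → ∀ ξ η : Ω → ℝ, StronglyMeasurable[F N] ξ → MemLp ξ 2 μ →
    StronglyMeasurable[F N] η → MemLp η 2 μ → ξ ≤ᵐ[μ] η → E t ξ ≤ᵐ[μ] E t η
  strictMono : ∀ t, t ≤ N → ∀ ξ η : Ω → ℝ, StronglyMeasurable[F N] ξ → MemLp ξ 2 μ →
    StronglyMeasurable[F N] η → MemLp η 2 μ → ξ ≤ᵐ[μ] η →
    0 < μ {ω | ξ ω < η ω} → 0 < μ {ω | E t ξ ω < E t η ω}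
  translation : ∀ t, t ≤ N → ∀ ξ ζ : Ω → ℝ, StronglyMeasurable[F N] ξ → MemLp ξ 2 μ →
    StronglyMeasurable[F t] ζ → MemLp ζ 2 μ → E t (ξ + ζ) =ᵐ[μ] E t ξ + ζ
  tower : ∀ s t, s ≤ t → t ≤ N → ∀ ξ : Ω → ℝ, StronglyMeasurable[F N] ξ → MemLp ξ 2 μ →
    E s (E t ξ) =ᵐ[μ] E s ξ
  zeroOne : ∀ t, t ≤ N → ∀ ξ η : Ω → ℝ, StronglyMeasurable[F N] ξ → MemLp ξ 2 μ →
    StronglyMeasurable[F N] η → MemLp η 2 μ → ∀ A : Set Ω, MeasurableSet[F t] A →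
    E t (A.indicator ξ + Aᶜ.indicator η) =ᵐ[μ]
      A.indicator (E t ξ) + Aᶜ.indicator (E t η)
  monoConv : ∀ t, t ≤ N → ∀ (ξs : ℕ → Ω → ℝ) (ξ : Ω → ℝ),
    (∀ n, StronglyMeasurable[F N] (ξs n)) → (∀ n, MemLp (ξs n) 2 μ) →
    StronglyMeasurable[F N] ξ → MemLp ξ 2 μ →
    (∀ᵐ ω ∂μ, (Monotone fun n => ξs n ω) ∨ (Antitone fun n => ξs n ω)) →
    (∀ᵐ ω ∂μ, Tendsto (fun n => ξs n ω) atTop (nhds (ξ ω))) →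
    ∀ᵐ ω ∂μ, Tendsto (fun n => E t (ξs n) ω) atTop (nhds (E t ξ ω))

section RunningExtrema

variable {Ω : Type*} {L K : ℕ → Ω → ℝ} {t u v : ℕ} {ω : Ω} {c : ℝ}

theorem le_runMax (hv : v ∈ Finset.Icc t u) : L v ω ≤ runMax L t u ω :=
  (Finset.le_fold_max _).2 (Or.inr ⟨v, hv, le_rfl⟩)

theorem runMax_le_iff (htu : t ≤ u) :
    runMax L t u ω ≤ c ↔ ∀ v ∈ Finset.Icc t u, L v ω ≤ c :=
  (Finset.fold_max_le c).trans
    ⟨fun h => h.2, fun h => ⟨h t (Finset.mem_Icc.2 ⟨le_rfl, htu⟩), h⟩⟩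

theorem runMin_le (hv : v ∈ Finset.Icc t u) : runMin K t u ω ≤ K v ω :=
  (Finset.fold_min_le _).2 (Or.inr ⟨v, hv, le_rfl⟩)

theorem runMax_const (htu : t ≤ u) : runMax (fun _ _ => c) t u ω = c :=
  le_antisymm ((runMax_le_iff htu).2 fun _ _ => le_rfl)
    (le_runMax (L := fun _ _ => c) (Finset.mem_Icc.2 ⟨le_rfl, htu⟩))

theorem runMax_add_const (htu : t ≤ u) :
    runMax (fun v ω => c + L v ω) t u ω = c + runMax L t u ω := by
  refine le_antisymm ((runMax_le_iff htu).2 fun v hv => add_le_add_right (le_runMax hv) c) ?_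
  rw [← le_sub_iff_add_le', runMax_le_iff htu]
  exact fun v hv => le_sub_iff_add_le'.2 (le_runMax (L := fun v ω => c + L v ω) hv)

theorem runMax_le_runMax_zero (htu : t ≤ u) : runMax L t u ω ≤ runMax L 0 u ω :=
  (runMax_le_iff htu).2 fun v hv =>
    le_runMax (Finset.mem_Icc.2 ⟨v.zero_le, (Finset.mem_Icc.1 hv).2⟩)

theorem runMax_posPart_eq_zero (h : ∀ v ≤ u, L v ω ≤ 0) :
    runMax (fun v ω => max (L v ω) 0) 0 u ω = 0 :=
  le_antisymm ((runMax_le_iff u.zero_le).2 fun v hv => max_le (h v (Finset.mem_Icc.1 hv).2) le_rfl)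
    ((le_max_right _ _).trans
      (le_runMax (L := fun v ω => max (L v ω) 0) (Finset.mem_Icc.2 ⟨le_rfl, u.zero_le⟩)))

theorem runMax_posPart_eq (hbefore : ∀ v < t, L v ω ≤ 0) (ht : 0 ≤ L t ω) (htu : t ≤ u) :
    runMax (fun v ω => max (L v ω) 0) 0 u ω = runMax L t u ω := by
  have hLt : 0 ≤ runMax L t u ω := ht.trans (le_runMax (Finset.mem_Icc.2 ⟨le_rfl, htu⟩))
  refine le_antisymm ((runMax_le_iff u.zero_le).2 fun v hv => max_le ?_ hLt)
    ((runMax_le_iff htu).2 fun v hv => (le_max_left _ 0).trans ?_)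
  · rcases lt_or_ge v t with hvt | hvt
    · exact (hbefore v hvt).trans hLt
    · exact le_runMax (Finset.mem_Icc.2 ⟨hvt, (Finset.mem_Icc.1 hv).2⟩)
  · exact le_runMax (L := fun v ω => max (L v ω) 0)
      (Finset.mem_Icc.2 ⟨v.zero_le, (Finset.mem_Icc.1 hv).2⟩)

end RunningExtrema

section DiscountedRunMax

variable {Ω : Type*} {r c : ℝ} {N t : ℕ} {L L' : ℕ → Ω → ℝ} {ω : Ω}

noncomputable def discRunMax (r : ℝ) (N : ℕ) (L : ℕ → Ω → ℝ) (t : ℕ) (ω : Ω) : ℝ :=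
  (∑ u ∈ Finset.Ico t N, r / (1 + r) * ((1 + r) ^ u)⁻¹ * runMax L t u ω)
    + ((1 + r) ^ N)⁻¹ * runMax L t N ω

theorem discount_nonneg (hr : 0 ≤ r) (u : ℕ) : 0 ≤ ((1 + r) ^ u)⁻¹ :=
  inv_nonneg.2 (pow_nonneg (by linarith) u)

theorem discount_weight_nonneg (hr : 0 ≤ r) (u : ℕ) : 0 ≤ r / (1 + r) * ((1 + r) ^ u)⁻¹ :=
  mul_nonneg (div_nonneg hr (by linarith)) (discount_nonneg hr u)

theorem sum_discount_weights (hr : 0 ≤ r) (htN : t ≤ N) :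
    ∑ u ∈ Finset.Ico t N, r / (1 + r) * ((1 + r) ^ u)⁻¹ + ((1 + r) ^ N)⁻¹
      = ((1 + r) ^ t)⁻¹ := by
  induction N, htN using Nat.le_induction with
  | base => simp
  | succ n htn ih =>
    have : (1 + r) ≠ 0 := by linarith
    rw [Finset.sum_Ico_succ_top htn, ← ih]
    field_simp
    ring

theorem discRunMax_const (hr : 0 ≤ r) (htN : t ≤ N) :
    discRunMax r N (fun _ _ => c) t ω = ((1 + r) ^ t)⁻¹ * c := by
  rw [discRunMax, Finset.sum_congr rfl fun u hu => by rw [runMax_const (Finset.mem_Ico.1 hu).1],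
    runMax_const htN, ← Finset.sum_mul, ← add_mul, sum_discount_weights hr htN]

theorem discRunMax_add_const (hr : 0 ≤ r) (htN : t ≤ N) :
    discRunMax r N (fun v ω => c + L v ω) t ω
      = ((1 + r) ^ t)⁻¹ * c + discRunMax r N L t ω := by
  rw [← discRunMax_const (ω := ω) hr htN, discRunMax, discRunMax, discRunMax,
    runMax_add_const htN, runMax_const htN, ← add_add_add_comm, ← Finset.sum_add_distrib,
    mul_add]
  congr 1
  refine Finset.sum_congr rfl fun u hu => ?_
  rw [runMax_add_const (Finset.mem_Ico.1 hu).1, runMax_const (Finset.mem_Ico.1 hu).1, mul_add]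

theorem discRunMax_mono_of_runMax_le (hr : 0 ≤ r) (htN : t ≤ N)
    (h : ∀ u, t ≤ u → u ≤ N → runMax L t u ω ≤ runMax L' t u ω) :
    discRunMax r N L t ω ≤ discRunMax r N L' t ω := by
  refine add_le_add (Finset.sum_le_sum fun u hu => ?_)
    (mul_le_mul_of_nonneg_left (h N htN le_rfl) (discount_nonneg hr N))
  obtain ⟨htu, huN⟩ := Finset.mem_Ico.1 hu
  exact mul_le_mul_of_nonneg_left (h u htu huN.le) (discount_weight_nonneg hr u)

theorem discRunMax_mono (hr : 0 ≤ r) (htN : t ≤ N) (h : ∀ v, t ≤ v → v ≤ N → L v ω ≤ L' v ω) :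
    discRunMax r N L t ω ≤ discRunMax r N L' t ω :=
  discRunMax_mono_of_runMax_le hr htN fun _ htu huN => (runMax_le_iff htu).2 fun v hv =>
    (h v (Finset.mem_Icc.1 hv).1 ((Finset.mem_Icc.1 hv).2.trans huN)).trans (le_runMax hv)

theorem mul_le_discRunMax (hr : 0 ≤ r) (htN : t ≤ N) :
    ((1 + r) ^ t)⁻¹ * L t ω ≤ discRunMax r N L t ω := by
  rw [← discRunMax_const hr htN]
  exact discRunMax_mono_of_runMax_le hr htN fun _ htu _ => by
    rw [runMax_const htu]
    exact le_runMax (Finset.mem_Icc.2 ⟨le_rfl, htu⟩)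

theorem discRunMax_le_discRunMax_zero (hr : 0 ≤ r) (htN : t ≤ N) (h0 : ∀ v ≤ N, 0 ≤ L v ω) :
    discRunMax r N L t ω ≤ discRunMax r N L 0 ω := by
  have htail : ∑ u ∈ Finset.Ico t N, r / (1 + r) * ((1 + r) ^ u)⁻¹ * runMax L t u ω
      ≤ ∑ u ∈ Finset.Ico t N, r / (1 + r) * ((1 + r) ^ u)⁻¹ * runMax L 0 u ω :=
    Finset.sum_le_sum fun u hu =>
      mul_le_mul_of_nonneg_left (runMax_le_runMax_zero (Finset.mem_Ico.1 hu).1)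
        (discount_weight_nonneg hr u)
  have hhead : 0 ≤ ∑ u ∈ Finset.Ico 0 t, r / (1 + r) * ((1 + r) ^ u)⁻¹ * runMax L 0 u ω :=
    Finset.sum_nonneg fun u _ => mul_nonneg (discount_weight_nonneg hr u)
      ((h0 0 N.zero_le).trans (le_runMax (Finset.mem_Icc.2 ⟨le_rfl, u.zero_le⟩)))
  have hlast := mul_le_mul_of_nonneg_left (runMax_le_runMax_zero (L := L) (ω := ω) htN)
    (discount_nonneg hr N)
  rw [discRunMax, discRunMax, ← Finset.sum_Ico_consecutive _ t.zero_le htN]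
  linarith

theorem discRunMax_posPart_eq_zero (h : ∀ v ≤ N, L v ω ≤ 0) :
    discRunMax r N (fun v ω => max (L v ω) 0) 0 ω = 0 := by
  have hz : ∀ u ≤ N, runMax (fun v ω => max (L v ω) 0) 0 u ω = 0 :=
    fun u huN => runMax_posPart_eq_zero fun v hvu => h v (hvu.trans huN)
  rw [discRunMax, hz N le_rfl, Finset.sum_eq_zero fun u hu => by
    rw [hz u (Finset.mem_Ico.1 hu).2.le, mul_zero]]
  simp

theorem discRunMax_posPart_eq (hbefore : ∀ v < t, L v ω ≤ 0) (ht : 0 ≤ L t ω) (htN : t ≤ N) :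
    discRunMax r N (fun v ω => max (L v ω) 0) 0 ω = discRunMax r N L t ω := by
  have hhead : ∑ u ∈ Finset.Ico 0 t,
      r / (1 + r) * ((1 + r) ^ u)⁻¹ * runMax (fun v ω => max (L v ω) 0) 0 u ω = 0 :=
    Finset.sum_eq_zero fun u hu => by
      rw [runMax_posPart_eq_zero fun v hvu => hbefore v (hvu.trans_lt (Finset.mem_Ico.1 hu).2),
        mul_zero]
  rw [discRunMax, discRunMax, ← Finset.sum_Ico_consecutive _ t.zero_le htN, hhead, zero_add,
    runMax_posPart_eq hbefore ht htN]
  congr 1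
  exact Finset.sum_congr rfl fun u hu => by
    rw [runMax_posPart_eq hbefore ht (Finset.mem_Ico.1 hu).1]

end DiscountedRunMax

section MemL2

variable {Ω : Type*} {m m0 : MeasurableSpace Ω} {μ : Measure[m0] Ω} {ξ η : Ω → ℝ}

def MemL2 (m : MeasurableSpace Ω) {m0 : MeasurableSpace Ω} (μ : Measure Ω) (ξ : Ω → ℝ) : Prop :=
  StronglyMeasurable[m] ξ ∧ MemLp ξ 2 μ

theorem MemL2.zero : MemL2 m μ (0 : Ω → ℝ) :=
  ⟨stronglyMeasurable_const, MemLp.zero⟩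

theorem MemL2.const [IsFiniteMeasure μ] (c : ℝ) : MemL2 m μ fun _ => c :=
  ⟨stronglyMeasurable_const, memLp_const c⟩

theorem MemL2.neg (hξ : MemL2 m μ ξ) : MemL2 m μ fun ω => -ξ ω :=
  ⟨hξ.1.neg, hξ.2.neg⟩

theorem MemL2.add (hξ : MemL2 m μ ξ) (hη : MemL2 m μ η) : MemL2 m μ fun ω => ξ ω + η ω :=
  ⟨hξ.1.add hη.1, hξ.2.add hη.2⟩

theorem MemL2.sub (hξ : MemL2 m μ ξ) (hη : MemL2 m μ η) : MemL2 m μ fun ω => ξ ω - η ω :=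
  ⟨hξ.1.sub hη.1, hξ.2.sub hη.2⟩

theorem MemL2.const_mul (hξ : MemL2 m μ ξ) (c : ℝ) : MemL2 m μ fun ω => c * ξ ω :=
  ⟨hξ.1.const_mul c, hξ.2.const_mul c⟩

theorem MemL2.max (hξ : MemL2 m μ ξ) (hη : MemL2 m μ η) : MemL2 m μ fun ω => max (ξ ω) (η ω) :=
  ⟨continuous_max.comp_stronglyMeasurable (hξ.1.prodMk hη.1), hξ.2.sup hη.2⟩

theorem MemL2.mono {m' : MeasurableSpace Ω} (hξ : MemL2 m μ ξ) (hm : m ≤ m') : MemL2 m' μ ξ :=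
  ⟨hξ.1.mono hm, hξ.2⟩

theorem MemL2.indicator (hm : m ≤ m0) {A : Set Ω} (hA : MeasurableSet[m] A) (hξ : MemL2 m μ ξ) :
    MemL2 m μ (A.indicator ξ) :=
  ⟨hξ.1.indicator hA, hξ.2.indicator (hm A hA)⟩

theorem MemL2.finset_sum {ι : Type*} (s : Finset ι) {f : ι → Ω → ℝ}
    (hf : ∀ i ∈ s, MemL2 m μ (f i)) : MemL2 m μ fun ω => ∑ i ∈ s, f i ω :=
  ⟨Finset.stronglyMeasurable_fun_sum s fun i hi => (hf i hi).1,
    by simpa only [← Finset.sum_apply] using memLp_finsetSum' s fun i hi => (hf i hi).2⟩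

theorem memL2_runMax {L : ℕ → Ω → ℝ} {t u : ℕ} (htu : t ≤ u)
    (hL : ∀ v ∈ Finset.Icc t u, MemL2 m μ (L v)) : MemL2 m μ (runMax L t u) := by
  suffices h : ∀ s ⊆ Finset.Icc t u, MemL2 m μ fun ω => s.fold max (L t ω) fun v => L v ω
    from h _ subset_rfl
  intro s
  induction s using Finset.induction_on with
  | empty => exact fun _ => hL t (Finset.mem_Icc.2 ⟨le_rfl, htu⟩)
  | insert a s ha ih =>
    intro hs
    simp only [Finset.fold_insert ha]
    exact (hL a (hs (Finset.mem_insert_self a s))).max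
      (ih ((Finset.subset_insert a s).trans hs))

theorem memL2_discRunMax {r : ℝ} {N t : ℕ} {L : ℕ → Ω → ℝ} (htN : t ≤ N)
    (hL : ∀ v, t ≤ v → v ≤ N → MemL2 m μ (L v)) : MemL2 m μ (discRunMax r N L t) := by
  have hmax : ∀ u, t ≤ u → u ≤ N → MemL2 m μ (runMax L t u) := fun u htu huN =>
    memL2_runMax htu fun v hv => hL v (Finset.mem_Icc.1 hv).1 ((Finset.mem_Icc.1 hv).2.trans huN)
  exact (MemL2.finset_sum _ fun u hu =>
      (hmax u (Finset.mem_Ico.1 hu).1 (Finset.mem_Ico.1 hu).2.le).const_mul _).add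
    ((hmax N htN le_rfl).const_mul _)

theorem MemL2.stopped {F : Filtration ℕ m0} {N : ℕ} {τ : Ω → ℕ}
    (hτ : ∀ t ≤ N, MeasurableSet[F t] {ω | τ ω = t}) (hτN : ∀ ω, τ ω ≤ N)
    {f : ℕ → Ω → ℝ} (hf : ∀ t ≤ N, MemL2 (F N) μ (f t)) :
    MemL2 (F N) μ fun ω => f (τ ω) ω := by
  have hsum : (fun ω => f (τ ω) ω)
      = fun ω => ∑ t ∈ Finset.range (N + 1), {ω | τ ω = t}.indicator (f t) ω := by
    funext ω
    rw [Finset.sum_eq_single_of_mem (τ ω) (Finset.mem_range.2 (Nat.lt_succ_of_le (hτN ω)))]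
    · simp
    · intro s _ hs
      simp [Ne.symm hs]
  rw [hsum]
  exact .finset_sum _ fun t ht =>
    have htN := Nat.le_of_lt_succ (Finset.mem_range.1 ht)
    (hf t htN).indicator (F.le N) (F.mono htN _ (hτ t htN))

end MemL2

theorem ae_forall_le_iff {Ω : Type*} [MeasurableSpace Ω] {μ : Measure Ω} {N : ℕ}
    {p : ℕ → Ω → Prop} : (∀ᵐ ω ∂μ, ∀ t ≤ N, p t ω) ↔ ∀ t ≤ N, ∀ᵐ ω ∂μ, p t ω := by
  simp only [ae_all_iff, eventually_imp_distrib_left]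

namespace NLExp

variable {Ω : Type*} {m0 : MeasurableSpace Ω} {μ : Measure Ω} {F : Filtration ℕ m0}
  {N t : ℕ} (EE : NLExp μ F N) {ξ η X W : Ω → ℝ}

theorem memL2_E (ht : t ≤ N) (hξ : MemL2 (F N) μ ξ) : MemL2 (F N) μ (EE.E t ξ) :=
  ⟨(EE.adapted t ht ξ hξ.1 hξ.2).mono (F.mono ht), EE.sqInt t ht ξ hξ.1 hξ.2⟩

theorem E_mono (ht : t ≤ N) (hξ : MemL2 (F N) μ ξ) (hη : MemL2 (F N) μ η) (h : ξ ≤ᵐ[μ] η) :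
    EE.E t ξ ≤ᵐ[μ] EE.E t η :=
  EE.mono t ht ξ η hξ.1 hξ.2 hη.1 hη.2 h

theorem E_congr (ht : t ≤ N) (hξ : MemL2 (F N) μ ξ) (hη : MemL2 (F N) μ η) (h : ξ =ᵐ[μ] η) :
    EE.E t ξ =ᵐ[μ] EE.E t η :=
  (EE.E_mono ht hξ hη h.le).antisymm (EE.E_mono ht hη hξ h.symm.le)

theorem E_E (ht : t ≤ N) (hξ : MemL2 (F N) μ ξ) : EE.E t (EE.E t ξ) =ᵐ[μ] EE.E t ξ :=
  EE.tower t t le_rfl ht ξ hξ.1 hξ.2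

theorem E_zero (ht : t ≤ N) : EE.E t 0 =ᵐ[μ] 0 := by
  -- translation gives `E_t[E_t 0] = 2 E_t[0]`, the tower property `E_t[E_t 0] = E_t[0]`
  have h0 : MemL2 (F N) μ (0 : Ω → ℝ) := .zero
  have htr := EE.translation t ht 0 (EE.E t 0) h0.1 h0.2 (EE.adapted t ht 0 h0.1 h0.2)
    (EE.memL2_E ht h0).2
  rw [zero_add] at htr
  filter_upwards [htr, EE.E_E ht h0] with ω h1 h2
  simp only [Pi.add_apply, Pi.zero_apply] at h1 ⊢
  linarith

theorem E_of_memL2 (ht : t ≤ N) {ζ : Ω → ℝ} (hζ : MemL2 (F t) μ ζ) : EE.E t ζ =ᵐ[μ] ζ := by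
  have h0 : MemL2 (F N) μ (0 : Ω → ℝ) := .zero
  have htr := EE.translation t ht 0 ζ h0.1 h0.2 hζ.1 hζ.2
  rw [zero_add] at htr
  filter_upwards [htr, EE.E_zero ht] with ω h1 h2
  simp only [h1, Pi.add_apply, h2, Pi.zero_apply, zero_add]

theorem E_nonneg (ht : t ≤ N) (hξ : MemL2 (F N) μ ξ) (h : 0 ≤ᵐ[μ] ξ) : 0 ≤ᵐ[μ] EE.E t ξ := by
  filter_upwards [EE.E_mono ht MemL2.zero hξ h, EE.E_zero ht] with ω h1 h2
  exact h2 ▸ h1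

theorem E_eq_on (ht : t ≤ N) (hξ : MemL2 (F N) μ ξ) (hη : MemL2 (F N) μ η) {A : Set Ω}
    (hA : MeasurableSet[F t] A) (h : ∀ᵐ ω ∂μ, ω ∈ A → ξ ω = η ω) :
    ∀ᵐ ω ∂μ, ω ∈ A → EE.E t ξ ω = EE.E t η ω := by
  have hAN : MeasurableSet[F N] A := F.mono ht A hA
  have hglue : A.indicator ξ + Aᶜ.indicator η =ᵐ[μ] η := by
    filter_upwards [h] with ω hω
    by_cases hωA : ω ∈ A <;> simp [hωA, hω]
  have hglue_mem : MemL2 (F N) μ (A.indicator ξ + Aᶜ.indicator η) :=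
    (hξ.indicator (F.le N) hAN).add (hη.indicator (F.le N) hAN.compl)
  filter_upwards [EE.zeroOne t ht ξ η hξ.1 hξ.2 hη.1 hη.2 A hA,
    EE.E_congr ht hglue_mem hη hglue] with ω h1 h2 hωA
  simpa [hωA] using h1.symm.trans h2

theorem tower_stopped {τ : Ω → ℕ} (hτ : ∀ t ≤ N, MeasurableSet[F t] {ω | τ ω = t})
    (hτN : ∀ ω, τ ω ≤ N) (hX : MemL2 (F N) μ X) :
    EE.E 0 (fun ω => EE.E (τ ω) X ω) =ᵐ[μ] EE.E 0 X := by
  -- `V 0 = X`, `V (N + 1) = E_τ X`, and by the zero-one law on `{τ = s}`,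
  -- `E_s[V (s + 1)] = E_s[V s]`
  set V : ℕ → Ω → ℝ := fun s ω => if τ ω < s then EE.E (τ ω) X ω else X ω
  have hV : ∀ s, MemL2 (F N) μ (V s) := fun s =>
    MemL2.stopped hτ hτN (f := fun t ω => if t < s then EE.E t X ω else X ω) fun t ht => by
      by_cases hts : t < s
      · simpa only [hts, if_true] using EE.memL2_E ht hX
      · simpa only [hts, if_false] using hX
  have hstep : ∀ s ≤ N, EE.E s (V (s + 1)) =ᵐ[μ] EE.E s (V s) := by
    intro s hs
    have hon : ∀ᵐ ω ∂μ, ω ∈ {ω | τ ω = s} →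
        EE.E s (V (s + 1)) ω = EE.E s (V s) ω := by
      filter_upwards [EE.E_eq_on hs (hV (s + 1)) (EE.memL2_E hs hX) (hτ s hs)
          (ae_of_all _ fun ω (hω : τ ω = s) => by simp [V, hω]),
        EE.E_eq_on hs (hV s) hX (hτ s hs)
          (ae_of_all _ fun ω (hω : τ ω = s) => by simp [V, hω]),
        EE.E_E hs hX] with ω h1 h2 h3 hω
      rw [h1 hω, h2 hω, h3]
    have hoff := EE.E_eq_on hs (hV (s + 1)) (hV s) (hτ s hs).compl
      (ae_of_all _ fun ω (hω : τ ω ≠ s) => by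
        simp only [V, Nat.lt_succ_iff_lt_or_eq, hω, or_false])
    filter_upwards [hon, hoff] with ω h1 h2
    by_cases hω : τ ω = s
    exacts [h1 hω, h2 hω]
  have hV0 : ∀ s ≤ N + 1, EE.E 0 (V s) =ᵐ[μ] EE.E 0 X := by
    intro s
    induction s with
    | zero => exact fun _ => by simp [V]
    | succ s ih =>
      intro hs
      have hsN : s ≤ N := Nat.le_of_lt_succ hs
      calc EE.E 0 (V (s + 1)) =ᵐ[μ] EE.E 0 (EE.E s (V (s + 1))) :=
            (EE.tower 0 s s.zero_le hsN _ (hV _).1 (hV _).2).symm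
        _ =ᵐ[μ] EE.E 0 (EE.E s (V s)) :=
            EE.E_congr N.zero_le (EE.memL2_E hsN (hV _)) (EE.memL2_E hsN (hV _)) (hstep s hsN)
        _ =ᵐ[μ] EE.E 0 (V s) := EE.tower 0 s s.zero_le hsN _ (hV _).1 (hV _).2
        _ =ᵐ[μ] EE.E 0 X := ih (hsN.trans N.le_succ)
  have hVN : V (N + 1) = fun ω => EE.E (τ ω) X ω :=
    funext fun ω => if_pos (Nat.lt_succ_of_le (hτN ω))
  exact hVN ▸ hV0 (N + 1) le_rfl

theorem E_stopped_le_of_le_E {Z : ℕ → Ω → ℝ} (hZ : ∀ t ≤ N, MemL2 (F N) μ (Z t))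
    (hW : MemL2 (F N) μ W) (hZW : ∀ t ≤ N, Z t ≤ᵐ[μ] EE.E t W) {τ σ : Ω → ℕ}
    (hτ : ∀ t ≤ N, MeasurableSet[F t] {ω | τ ω = t}) (hτN : ∀ ω, τ ω ≤ N)
    (hσ : ∀ t ≤ N, MeasurableSet[F t] {ω | σ ω = t}) (hσN : ∀ ω, σ ω ≤ N)
    (hσZ : ∀ t ≤ N, ∀ᵐ ω ∂μ, σ ω = t → Z t ω = EE.E t W ω) :
    EE.E 0 (fun ω => Z (τ ω) ω) ≤ᵐ[μ] EE.E 0 (fun ω => Z (σ ω) ω) := by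
  have hτZ : (fun ω => Z (τ ω) ω) ≤ᵐ[μ] fun ω => EE.E (τ ω) W ω := by
    filter_upwards [ae_forall_le_iff.2 hZW] with ω h using h _ (hτN ω)
  have hσZ' : (fun ω => EE.E (σ ω) W ω) =ᵐ[μ] fun ω => Z (σ ω) ω := by
    filter_upwards [ae_forall_le_iff.2 hσZ] with ω h using (h _ (hσN ω) rfl).symm
  have hEW : ∀ t ≤ N, MemL2 (F N) μ (EE.E t W) := fun t ht => EE.memL2_E ht hW
  calc EE.E 0 (fun ω => Z (τ ω) ω) ≤ᵐ[μ] EE.E 0 (fun ω => EE.E (τ ω) W ω) :=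
        EE.E_mono N.zero_le (.stopped hτ hτN hZ) (.stopped hτ hτN hEW) hτZ
    _ =ᵐ[μ] EE.E 0 W := EE.tower_stopped hτ hτN hW
    _ =ᵐ[μ] EE.E 0 (fun ω => EE.E (σ ω) W ω) := (EE.tower_stopped hσ hσN hW).symm
    _ =ᵐ[μ] EE.E 0 (fun ω => Z (σ ω) ω) :=
        EE.E_congr N.zero_le (.stopped hσ hσN hEW) (.stopped hσ hσN hZ) hσZ'

end NLExp

theorem ENat.toNat_min_natCast_eq_iff {x : ℕ∞} {t N : ℕ} (ht : t ≤ N) :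
    (min x N).toNat = t ↔ x = t ∨ t = N ∧ (N : ℕ∞) < x := by
  induction x using ENat.recTopCoe with
  | top => simp [eq_comm]
  | coe n =>
    rw [← Nat.mono_cast.map_min, ENat.toNat_natCast, Nat.cast_inj, Nat.cast_lt]
    omega

theorem ENat.natCast_lt_iff_forall_ne {x : ℕ∞} {N : ℕ} : (N : ℕ∞) < x ↔ ∀ s ≤ N, x ≠ s := by
  induction x using ENat.recTopCoe with
  | top => simp
  | coe n =>
    simp only [Nat.cast_lt, ne_eq, Nat.cast_inj]
    exact ⟨fun h s hs hns => by omega, fun h => not_le.1 fun hn => h n hn rfl⟩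

theorem measurableSet_toNat_min_eq {Ω : Type*} {m0 : MeasurableSpace Ω} {F : Filtration ℕ m0}
    {N t : ℕ} {τ : Ω → ℕ∞} (hτ : ∀ t ≤ N, MeasurableSet[F t] {ω | τ ω = t}) (ht : t ≤ N) :
    MeasurableSet[F t] {ω | (min (τ ω) N).toNat = t} := by
  simp only [ENat.toNat_min_natCast_eq_iff ht, Set.ofPred_or]
  refine (hτ t ht).union ?_
  rcases eq_or_ne t N with rfl | htN
  · simp only [true_and, ENat.natCast_lt_iff_forall_ne, Set.ofPred_forall]
    exact .iInter fun s => .iInter fun hs => (F.mono hs _ (hτ s hs)).compl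
  · simp [htN]

theorem exists_le_of_iInf_le {p : ℕ → Prop} {n : ℕ} (h : ⨅ (t : ℕ) (_ : p t), (t : ℕ∞) ≤ n) :
    ∃ t ≤ n, p t := by
  by_contra! hne
  have hlt : ((n + 1 : ℕ) : ℕ∞) ≤ ⨅ (t : ℕ) (_ : p t), (t : ℕ∞) :=
    le_iInf₂ fun t ht => Nat.cast_le.2 (not_le.1 fun htn => hne t htn ht)
  have := hlt.trans h
  norm_cast at this
  omega

section AmericanPut

variable {Ω : Type*} {m0 : MeasurableSpace Ω} {μ : Measure Ω} {F : Filtration ℕ m0}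
  {N t : ℕ} {r k : ℝ} {S K : ℕ → Ω → ℝ}

theorem le_of_natCast_lt_of_le_iInf {ω : Ω} {x : ℕ∞} {v : ℕ}
    (hbar : x ≤ ⨅ (t : ℕ) (_ : t ≤ N ∧ K t ω < k), (t : ℕ∞)) (hv : v ≤ N)
    (hvx : (v : ℕ∞) < x) : k ≤ K v ω :=
  not_lt.1 fun hlt => (hbar.trans (iInf₂_le v ⟨hv, hlt⟩)).not_gt hvx

theorem le_of_iInf_le_of_runMin_eq {ω : Ω} {x : ℕ∞} (hxN : x ≤ N)
    (hlow : ⨅ (t : ℕ) (_ : t ≤ N ∧ K t ω ≤ k), (t : ℕ∞) ≤ x)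
    (hmin : runMin K 0 x.toNat ω = K x.toNat ω) : K x.toNat ω ≤ k := by
  lift x to ℕ using ne_top_of_le_ne_top (ENat.natCast_ne_top N) hxN
  obtain ⟨s, hsx, -, hs⟩ := exists_le_of_iInf_le hlow
  rw [ENat.toNat_natCast] at hmin ⊢
  exact hmin.symm.le.trans ((runMin_le (Finset.mem_Icc.2 ⟨s.zero_le, hsx⟩)).trans hs)

variable (EE : NLExp μ F N)

def NLExp.Represents (r : ℝ) (K S : ℕ → Ω → ℝ) : Prop :=
  ∀ t ≤ N, (fun ω => -(((1 + r) ^ t)⁻¹ * S t ω)) =ᵐ[μ]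
    EE.E t (discRunMax r N (fun v ω => -K v ω) t)

variable {EE}

noncomputable def putMajorant (r : ℝ) (N : ℕ) (k : ℝ) (K : ℕ → Ω → ℝ) : Ω → ℝ :=
  discRunMax r N (fun v ω => max (k - K v ω) 0) 0

theorem putMajorant_nonneg (hr : 0 ≤ r) (ω : Ω) : 0 ≤ putMajorant r N k K ω :=
  (mul_nonneg (by norm_num : (0 : ℝ) ≤ ((1 + r) ^ 0)⁻¹) (le_max_right (k - K 0 ω) 0)).trans
    (mul_le_discRunMax (L := fun v ω => max (k - K v ω) 0) hr N.zero_le)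

theorem memL2_putMajorant [IsFiniteMeasure μ] (hK : ∀ t ≤ N, MemL2 (F t) μ (K t)) :
    MemL2 (F N) μ (putMajorant r N k K) :=
  memL2_discRunMax N.zero_le fun v _ hv =>
    ((MemL2.const k).sub ((hK v hv).mono (F.mono hv))).max (.const 0)

theorem NLExp.Represents.S_le_K (hrep : EE.Represents r K S) (hr : 0 ≤ r)
    (hK : ∀ t ≤ N, MemL2 (F t) μ (K t)) (ht : t ≤ N) : S t ≤ᵐ[μ] K t := by
  have hG : MemL2 (F N) μ (discRunMax r N (fun v ω => -K v ω) t) :=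
    memL2_discRunMax ht fun v _ hv => ((hK v hv).mono (F.mono hv)).neg
  have hlow : MemL2 (F t) μ fun ω => ((1 + r) ^ t)⁻¹ * -K t ω := (hK t ht).neg.const_mul _
  have hq : 0 < ((1 + r) ^ t)⁻¹ := inv_pos.2 (pow_pos (by linarith) t)
  filter_upwards [hrep t ht, EE.E_of_memL2 ht hlow, EE.E_mono ht (hlow.mono (F.mono ht)) hG
    (ae_of_all _ fun ω => mul_le_discRunMax (L := fun v ω => -K v ω) hr ht)] with ω h1 h2 h3
  have : ((1 + r) ^ t)⁻¹ * S t ω ≤ ((1 + r) ^ t)⁻¹ * K t ω := by linarith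
  exact le_of_mul_le_mul_left this hq

theorem NLExp.Represents.mul_sub_eq_E_discRunMax [IsFiniteMeasure μ] (hrep : EE.Represents r K S)
    (hr : 0 ≤ r) (hK : ∀ t ≤ N, MemL2 (F t) μ (K t)) (ht : t ≤ N) :
    (fun ω => ((1 + r) ^ t)⁻¹ * (k - S t ω)) =ᵐ[μ]
      EE.E t (discRunMax r N (fun v ω => k - K v ω) t) := by
  have hG : MemL2 (F N) μ (discRunMax r N (fun v ω => -K v ω) t) :=
    memL2_discRunMax ht fun v _ hv => ((hK v hv).mono (F.mono hv)).neg
  have hshift : discRunMax r N (fun v ω => k - K v ω) t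
      = discRunMax r N (fun v ω => -K v ω) t + fun _ => ((1 + r) ^ t)⁻¹ * k := by
    funext ω
    simp only [sub_eq_add_neg]
    rw [discRunMax_add_const hr ht, Pi.add_apply, add_comm]
  rw [hshift]
  filter_upwards [hrep t ht, EE.translation t ht _ (fun _ => ((1 + r) ^ t)⁻¹ * k) hG.1 hG.2
    stronglyMeasurable_const (memLp_const _)] with ω h1 h2
  rw [h2, Pi.add_apply, ← h1]
  ring

theorem NLExp.Represents.putPayoff_le_E_putMajorant [IsFiniteMeasure μ]
    (hrep : EE.Represents r K S) (hr : 0 ≤ r) (hK : ∀ t ≤ N, MemL2 (F t) μ (K t))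
    (ht : t ≤ N) :
    (fun ω => ((1 + r) ^ t)⁻¹ * max (k - S t ω) 0) ≤ᵐ[μ]
      EE.E t (putMajorant r N k K) := by
  have hY : MemL2 (F N) μ (discRunMax r N (fun v ω => k - K v ω) t) :=
    memL2_discRunMax ht fun v _ hv => (MemL2.const k).sub ((hK v hv).mono (F.mono hv))
  have hW := memL2_putMajorant (r := r) (k := k) hK
  have hYW : ∀ ω, discRunMax r N (fun v ω => k - K v ω) t ω ≤ putMajorant r N k K ω :=
    fun ω => (discRunMax_mono (L' := fun v ω => max (k - K v ω) 0) hr ht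
      fun v _ _ => le_max_left _ _).trans
      (discRunMax_le_discRunMax_zero hr ht fun v _ => le_max_right _ _)
  filter_upwards [hrep.mul_sub_eq_E_discRunMax (k := k) hr hK ht,
    EE.E_mono ht hY hW (ae_of_all _ hYW),
    EE.E_nonneg ht hW (ae_of_all _ (putMajorant_nonneg hr))] with ω h1 h2 h3
  rw [mul_max_of_nonneg _ _ (discount_nonneg hr t), mul_zero, h1]
  exact max_le h2 h3

theorem NLExp.Represents.putPayoff_eq_E_putMajorant_on [IsFiniteMeasure μ]
    (hrep : EE.Represents r K S) (hr : 0 ≤ r) (hK : ∀ t ≤ N, MemL2 (F t) μ (K t))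
    (ht : t ≤ N) {A : Set Ω} (hA : MeasurableSet[F t] A)
    (hAK : ∀ᵐ ω ∂μ, ω ∈ A → (∀ v < t, k ≤ K v ω) ∧ K t ω ≤ k) :
    ∀ᵐ ω ∂μ, ω ∈ A →
      ((1 + r) ^ t)⁻¹ * max (k - S t ω) 0 = EE.E t (putMajorant r N k K) ω := by
  have hY : MemL2 (F N) μ (discRunMax r N (fun v ω => k - K v ω) t) :=
    memL2_discRunMax ht fun v _ hv => (MemL2.const k).sub ((hK v hv).mono (F.mono hv))
  have hW := memL2_putMajorant (r := r) (k := k) hK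
  have hYW : ∀ᵐ ω ∂μ, ω ∈ A →
      discRunMax r N (fun v ω => k - K v ω) t ω = putMajorant r N k K ω := by
    filter_upwards [hAK] with ω h hω
    exact (discRunMax_posPart_eq (L := fun v ω => k - K v ω)
      (fun v hv => sub_nonpos.2 ((h hω).1 v hv)) (sub_nonneg.2 (h hω).2) ht).symm
  filter_upwards [hrep.mul_sub_eq_E_discRunMax (k := k) hr hK ht, EE.E_eq_on ht hY hW hA hYW,
    EE.E_nonneg ht hW (ae_of_all _ (putMajorant_nonneg hr))] with ω h1 h2 h3 hω
  rw [mul_max_of_nonneg _ _ (discount_nonneg hr t), mul_zero, h1, h2 hω]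
  exact max_eq_left h3

theorem NLExp.Represents.putPayoff_eq_E_putMajorant_of_le_K [IsFiniteMeasure μ]
    (hrep : EE.Represents r K S) (hr : 0 ≤ r) (hK : ∀ t ≤ N, MemL2 (F t) μ (K t)) :
    ∀ᵐ ω ∂μ, (∀ v ≤ N, k ≤ K v ω) →
      ((1 + r) ^ N)⁻¹ * max (k - S N ω) 0 = EE.E N (putMajorant r N k K) ω := by
  filter_upwards [hrep.putPayoff_le_E_putMajorant hr hK le_rfl,
    EE.E_of_memL2 le_rfl (memL2_putMajorant hK)] with ω h1 h2 hkK
  have hW : putMajorant r N k K ω = 0 :=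
    discRunMax_posPart_eq_zero (L := fun v ω => k - K v ω) fun v hv => sub_nonpos.2 (hkK v hv)
  have h0 : 0 ≤ ((1 + r) ^ N)⁻¹ * max (k - S N ω) 0 :=
    mul_nonneg (discount_nonneg hr N) (le_max_right _ _)
  rw [h2, hW] at h1 ⊢
  exact le_antisymm h1 h0

theorem NLExp.Represents.putPayoff_eq_E_putMajorant_at [IsFiniteMeasure μ]
    (hrep : EE.Represents r K S) (hr : 0 ≤ r) (hK : ∀ t ≤ N, MemL2 (F t) μ (K t))
    {τ : Ω → ℕ∞} (hτ : ∀ t ≤ N, MeasurableSet[F t] {ω | τ ω = t})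
    (hbefore : ∀ᵐ ω ∂μ, ∀ v ≤ N, (v : ℕ∞) < τ ω → k ≤ K v ω)
    (hat : ∀ᵐ ω ∂μ, τ ω ≤ N → K (τ ω).toNat ω ≤ k) (ht : t ≤ N) :
    ∀ᵐ ω ∂μ, (min (τ ω) N).toNat = t →
      ((1 + r) ^ t)⁻¹ * max (k - S t ω) 0 = EE.E t (putMajorant r N k K) ω := by
  have hon := hrep.putPayoff_eq_E_putMajorant_on hr hK ht (hτ t ht) <| by
    filter_upwards [hbefore, hat] with ω h1 h2 (hω : τ ω = t)
    refine ⟨fun v hv => h1 v (hv.le.trans ht) (hω ▸ Nat.cast_lt.2 hv), ?_⟩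
    simpa [hω] using h2 (hω ▸ Nat.cast_le.2 ht)
  filter_upwards [hon, hrep.putPayoff_eq_E_putMajorant_of_le_K (k := k) hr hK, hbefore]
    with ω h1 h2 h3 hσ
  rcases (ENat.toNat_min_natCast_eq_iff ht).1 hσ with h | ⟨rfl, hN⟩
  · exact h1 h
  · exact h2 fun v hv => h3 v hv ((Nat.cast_le.2 hv).trans_lt hN)

end AmericanPut

theorem american_put_positive_part_optimal_general
{Ω : Type*}
    [m0 : MeasurableSpace Ω]
    (μ : Measure Ω) [IsProbabilityMeasure μ]
    (F : Filtration ℕ m0) (N : ℕ)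
    (EE : NLExp μ F N)
    (r : ℝ) (hr : 0 < r)
    (S : ℕ → Ω → ℝ)
    (hS_adapted : ∀ t, t ≤ N → StronglyMeasurable[F t] (S t))
    (hS_sqInt : ∀ t, t ≤ N → MemLp (fun ω => ((1 + r) ^ t)⁻¹ * S t ω) 2 μ)
(K : ℕ → Ω → ℝ)
    (hK_adapted : ∀ t, t ≤ N → StronglyMeasurable[F t] (K t))
    (hK_sqInt : ∀ t, t ≤ N → MemLp (K t) 2 μ)
    (hK_rep : ∀ t, t ≤ N →
      (fun ω => -(((1 + r) ^ t)⁻¹ * S t ω)) =ᵐ[μ] EE.E t fun ω =>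
        (∑ u ∈ Finset.Ico t N,
          r / (1 + r) * ((1 + r) ^ u)⁻¹ * runMax (fun v ω' => -K v ω') t u ω)
        + ((1 + r) ^ N)⁻¹ * runMax (fun v ω' => -K v ω') t N ω)
    (k : ℝ)
    (τlowk τbark : Ω → ℕ∞)
    (hτlowk_def : ∀ ω, τlowk ω = ⨅ (t : ℕ) (_ : t ≤ N ∧ K t ω ≤ k), (t : ℕ∞))
    (hτbark_def : ∀ ω, τbark ω = ⨅ (t : ℕ) (_ : t ≤ N ∧ K t ω < k), (t : ℕ∞))
    (τk : Ω → ℕ∞)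
    (hτk_meas : ∀ t : ℕ, t ≤ N → MeasurableSet[F t] {ω | τk ω = (t : ℕ∞)})
    (hbetween : ∀ᵐ ω ∂μ, τlowk ω ≤ τk ω ∧ τk ω ≤ τbark ω)
    (hmin : ∀ᵐ ω ∂μ, τk ω ≤ (N : ℕ∞) →
      runMin K 0 (τk ω).toNat ω = K (τk ω).toNat ω) :
    (∀ᵐ ω ∂μ, τk ω ≤ (N : ℕ∞) →
      K (τk ω).toNat ω ≤ k ∧ S (τk ω).toNat ω ≤ k) ∧
    ∀ τ : Ω → ℕ, IsStoppingTime F (fun ω => (τ ω : WithTop ℕ)) → (∀ ω, τ ω ≤ N) →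
      EE.E 0 (fun ω => ((1 + r) ^ (τ ω))⁻¹ * max (k - S (τ ω) ω) 0) ≤ᵐ[μ]
      EE.E 0 fun ω => ((1 + r) ^ ((min (τk ω) (N : ℕ∞)).toNat))⁻¹ *
        max (k - S ((min (τk ω) (N : ℕ∞)).toNat) ω) 0 := by
  have hK : ∀ t ≤ N, MemL2 (F t) μ (K t) := fun t ht => ⟨hK_adapted t ht, hK_sqInt t ht⟩
  have hrep : EE.Represents r K S := hK_rep
  have hbefore : ∀ᵐ ω ∂μ, ∀ v ≤ N, (v : ℕ∞) < τk ω → k ≤ K v ω := by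
    filter_upwards [hbetween] with ω hω v hv
    exact le_of_natCast_lt_of_le_iInf (hω.2.trans_eq (hτbark_def ω)) hv
  have hat : ∀ᵐ ω ∂μ, τk ω ≤ N → K (τk ω).toNat ω ≤ k := by
    filter_upwards [hbetween, hmin] with ω hω hmω hτN
    exact le_of_iInf_le_of_runMin_eq hτN ((hτlowk_def ω).symm.trans_le hω.1) (hmω hτN)
  refine ⟨?_, fun τ hτ hτN => ?_⟩
  · filter_upwards [hat, ae_forall_le_iff.2 fun t ht => hrep.S_le_K hr.le hK ht]
      with ω hat hSK hτN
    exact ⟨hat hτN, (hSK _ (ENat.toNat_le_of_le_natCast hτN)).trans (hat hτN)⟩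
  have hS : ∀ t ≤ N, MemL2 (F N) μ (S t) := fun t ht =>
    ⟨(hS_adapted t ht).mono (F.mono ht), by
      simpa [mul_inv_cancel_left₀ (pow_ne_zero t (by linarith : (1 + r) ≠ 0))]
        using (hS_sqInt t ht).const_mul ((1 + r) ^ t)⟩
  exact EE.E_stopped_le_of_le_E
    (fun t ht => (((MemL2.const k).sub (hS t ht)).max (.const 0)).const_mul _)
    (memL2_putMajorant hK) (fun t ht => hrep.putPayoff_le_E_putMajorant hr.le hK ht)
    (fun t _ => by simpa using hτ.measurableSet_eq t) hτN
    (fun t ht => measurableSet_toNat_min_eq hτk_meas ht)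
    (fun ω => ENat.toNat_le_of_le_natCast (min_le_right _ _))
    (fun t ht => hrep.putPayoff_eq_E_putMajorant_at hr.le hK hτk_meas hbefore hat ht)

/-- **Optimal exercise of the American put payoff with positive part.** Let `τᵏ` be
an extended stopping time with `τ̲ᵏ ≤ τᵏ ≤ τ̄ᵏ` a.s. and, a.s. on `{τᵏ ≤ N}`,
`min_{0≤v≤τᵏ} K_v = K_{τᵏ}`. Then (a) a.s. on `{τᵏ ≤ N}`, `K_{τᵏ} ≤ k` and
`P_{τᵏ} ≤ k`; and (b) `τᵏ ∧ N ∈ T_{0,N}` maximizes the expected payoff of the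
American put with strike `k`: for every stopping time `τ ∈ T_{0,N}`,
`E 0 [(1+r)^{-τ}(k - P_τ)⁺] ≤ E 0 [(1+r)^{-(τᵏ∧N)}(k - P_{τᵏ∧N})⁺]` a.s. -/
theorem american_put_positive_part_optimal
{Ω : Type*} [TopologicalSpace Ω] [PolishSpace Ω]
    [m0 : MeasurableSpace Ω] [BorelSpace Ω]
    (μ : Measure Ω) [IsProbabilityMeasure μ]
    (F : Filtration ℕ m0) (N : ℕ) (hN : 1 ≤ N)
    (EE : NLExp μ F N)
    (r : ℝ) (hr : 0 < r)
    (S : ℕ → Ω → ℝ)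
    (hS_adapted : ∀ t, t ≤ N → StronglyMeasurable[F t] (S t))
    (hS_sqInt : ∀ t, t ≤ N → MemLp (fun ω => ((1 + r) ^ t)⁻¹ * S t ω) 2 μ)
(K : ℕ → Ω → ℝ)
    (hK_adapted : ∀ t, t ≤ N → StronglyMeasurable[F t] (K t))
    (hK_sqInt : ∀ t, t ≤ N → MemLp (K t) 2 μ)
    (hK_rep : ∀ t, t ≤ N →
      (fun ω => -(((1 + r) ^ t)⁻¹ * S t ω)) =ᵐ[μ] EE.E t fun ω =>
        (∑ u ∈ Finset.Ico t N,
          r / (1 + r) * ((1 + r) ^ u)⁻¹ * runMax (fun v ω' => -K v ω') t u ω)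
        + ((1 + r) ^ N)⁻¹ * runMax (fun v ω' => -K v ω') t N ω)
    (k : ℝ) (hk : 0 ≤ k)
    (τlowk τbark : Ω → ℕ∞)
    (hτlowk_def : ∀ ω, τlowk ω = ⨅ (t : ℕ) (_ : t ≤ N ∧ K t ω ≤ k), (t : ℕ∞))
    (hτbark_def : ∀ ω, τbark ω = ⨅ (t : ℕ) (_ : t ≤ N ∧ K t ω < k), (t : ℕ∞))
    (τk : Ω → ℕ∞)
    (hτk_meas : ∀ t : ℕ, t ≤ N → MeasurableSet[F t] {ω | τk ω = (t : ℕ∞)})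
    (hτk_range : ∀ ω, τk ω ≤ (N : ℕ∞) ∨ τk ω = ⊤)
    (hbetween : ∀ᵐ ω ∂μ, τlowk ω ≤ τk ω ∧ τk ω ≤ τbark ω)
    (hmin : ∀ᵐ ω ∂μ, τk ω ≤ (N : ℕ∞) →
      runMin K 0 (τk ω).toNat ω = K (τk ω).toNat ω) :
    (∀ᵐ ω ∂μ, τk ω ≤ (N : ℕ∞) →
      K (τk ω).toNat ω ≤ k ∧ S (τk ω).toNat ω ≤ k) ∧
    ∀ τ : Ω → ℕ, IsStoppingTime F (fun ω => (τ ω : WithTop ℕ)) → (∀ ω, τ ω ≤ N) →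
      EE.E 0 (fun ω => ((1 + r) ^ (τ ω))⁻¹ * max (k - S (τ ω) ω) 0) ≤ᵐ[μ]
      EE.E 0 fun ω => ((1 + r) ^ ((min (τk ω) (N : ℕ∞)).toNat))⁻¹ *
        max (k - S ((min (τk ω) (N : ℕ∞)).toNat) ω) 0 :=
  american_put_positive_part_optimal_general (m0 := m0) μ F N EE r hr S hS_adapted hS_sqInt K
    hK_adapted hK_sqInt hK_rep k τlowk τbark hτlowk_def hτbark_def τk hτk_meas hbetween hmin
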